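/- For all indices j ∈ {1,…,p} and i ∈ {1,…,n}: [sⱼ + M_{fⱼ}∘∂_{tⱼ}, gᵢ] = 0, i.e. the operator sⱼ + M_{fⱼ}∘∂_{tⱼ} commutes with gᵢ = ∂_{xᵢ} + Σ_k M_{∂f_k/∂xᵢ}∘∂_{t_k} as K-linear endomorphisms of K[x₁,…,xₙ,t₁,…,t_p]. -/

import Mathlib

open MvPolynomial

variable (K : Type*) [Field K] (n p : ℕ)

/-- The image of `fⱼ ∈ K[x₁,…,xₙ]` in `K[x₁,…,xₙ,t₁,…,t_p]` under the natural
inclusion. -/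
noncomputable def liftX (f : MvPolynomial (Fin n) K) :
    MvPolynomial (Fin n ⊕ Fin p) K :=
  rename Sum.inl f

/-- The operator `gᵢ = ∂_{xᵢ} + Σⱼ M_{∂fⱼ/∂xᵢ} ∘ ∂_{tⱼ}` on `K[x₁,…,xₙ,t₁,…,t_p]`. -/
noncomputable def gOp (f : Fin p → MvPolynomial (Fin n) K) (i : Fin n) :
    Module.End K (MvPolynomial (Fin n ⊕ Fin p) K) :=
  (pderiv (Sum.inl i)).toLinearMap +
    ∑ j, LinearMap.mulLeft K (pderiv (Sum.inl i) (liftX K n p (f j))) *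
      (pderiv (Sum.inr j)).toLinearMap

/-- The operator `sⱼ = −M_{tⱼ} ∘ ∂_{tⱼ} − id` on `K[x₁,…,xₙ,t₁,…,t_p]`
(Mellin substitution `sⱼ ↦ −tⱼ∂_{tⱼ} − 1`). -/
noncomputable def sOp (j : Fin p) :
    Module.End K (MvPolynomial (Fin n ⊕ Fin p) K) :=
  -(LinearMap.mulLeft K (X (Sum.inr j)) * (pderiv (Sum.inr j)).toLinearMap) - 1

/-
Both `gᵢ` and `Eⱼ := (tⱼ - fⱼ) ∂_{tⱼ}` are derivations, and the operator of the theorem is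
`-Eⱼ - id`. The commutator of two derivations is a derivation, so it suffices to check that
`Eⱼ` and `gᵢ` commute on the generators `xₗ`, `t_k`. This holds because `gᵢ` kills every
`t_k - f_k` (it is `∂_{xᵢ}` in the coordinates `x, t - f`), while `Eⱼ` kills every polynomial
in the `x`-variables alone, in particular the coefficients `∂f_k/∂xᵢ` of `gᵢ`.
-/

theorem Derivation.finset_sum_apply {ι R A M : Type*} [CommSemiring R] [CommSemiring A]
    [Algebra R A] [AddCommMonoid M] [Module A M] [Module R M] (s : Finset ι)
    (D : ι → Derivation R A M) (a : A) : (∑ i ∈ s, D i) a = ∑ i ∈ s, D i a := by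
  classical
  induction s using Finset.induction_on with
  | empty => simp
  | insert i s hi ih => simp [Finset.sum_insert hi, ih]

theorem MvPolynomial.derivation_commute_of_forall_X {R σ : Type*} [CommRing R]
    (D₁ D₂ : Derivation R (MvPolynomial σ R) (MvPolynomial σ R))
    (h : ∀ i, D₁ (D₂ (X i)) = D₂ (D₁ (X i))) : Commute D₁.toLinearMap D₂.toLinearMap := by
  have hbracket : ⁅D₁, D₂⁆ = 0 :=
    derivation_ext fun i => by rw [Derivation.commutator_apply, h, sub_self, Derivation.zero_apply]
  refine LinearMap.ext fun q => ?_
  simpa [Derivation.commutator_apply, sub_eq_zero] using congr($hbracket q)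

section Operators

variable {K n p}

theorem pderiv_inr_liftX (j : Fin p) (g : MvPolynomial (Fin n) K) :
    pderiv (Sum.inr j) (liftX K n p g) = 0 := by
  refine pderiv_eq_zero_of_notMem_vars fun hj => ?_
  obtain ⟨_, -, h⟩ := Finset.mem_image.1 (vars_rename _ g hj)
  exact Sum.inl_ne_inr h

theorem pderiv_inl_liftX (i : Fin n) (g : MvPolynomial (Fin n) K) :
    pderiv (Sum.inl i) (liftX K n p g) = liftX K n p (pderiv i g) :=
  pderiv_rename Sum.inl_injective i g

variable (K n p)

noncomputable def gDer (f : Fin p → MvPolynomial (Fin n) K) (i : Fin n) :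
    Derivation K (MvPolynomial (Fin n ⊕ Fin p) K) (MvPolynomial (Fin n ⊕ Fin p) K) :=
  pderiv (Sum.inl i) + ∑ k, pderiv (Sum.inl i) (liftX K n p (f k)) • pderiv (Sum.inr k)

noncomputable def eulerDer (f : Fin p → MvPolynomial (Fin n) K) (j : Fin p) :
    Derivation K (MvPolynomial (Fin n ⊕ Fin p) K) (MvPolynomial (Fin n ⊕ Fin p) K) :=
  (X (Sum.inr j) - liftX K n p (f j)) • pderiv (Sum.inr j)

variable {K n p}

theorem gDer_toLinearMap (f : Fin p → MvPolynomial (Fin n) K) (i : Fin n) :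
    (gDer K n p f i).toLinearMap = gOp K n p f i := by
  refine LinearMap.ext fun q => ?_
  simp [gDer, gOp, Derivation.finset_sum_apply]

theorem sOp_add_mulLeft_liftX (f : Fin p → MvPolynomial (Fin n) K) (j : Fin p) :
    sOp K n p j + LinearMap.mulLeft K (liftX K n p (f j)) * (pderiv (Sum.inr j)).toLinearMap =
      -(eulerDer K n p f j).toLinearMap - 1 := by
  refine LinearMap.ext fun q => ?_
  simp only [sOp, eulerDer, LinearMap.add_apply, LinearMap.sub_apply, LinearMap.neg_apply,
    Module.End.mul_apply, LinearMap.mulLeft_apply, Derivation.coeFn_coe, Derivation.smul_apply,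
    smul_eq_mul]
  ring

theorem gDer_X_inl (f : Fin p → MvPolynomial (Fin n) K) (i l : Fin n) :
    gDer K n p f i (X (Sum.inl l)) = if l = i then 1 else 0 := by
  simp [gDer, pderiv_X, Pi.single_apply, Derivation.finset_sum_apply]

theorem gDer_X_inr (f : Fin p → MvPolynomial (Fin n) K) (i : Fin n) (k : Fin p) :
    gDer K n p f i (X (Sum.inr k)) = liftX K n p (pderiv i (f k)) := by
  simp [gDer, pderiv_X, Pi.single_apply, pderiv_inl_liftX, Derivation.finset_sum_apply]

theorem gDer_X_inr_sub_liftX (f : Fin p → MvPolynomial (Fin n) K) (i : Fin n) (k : Fin p) :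
    gDer K n p f i (X (Sum.inr k) - liftX K n p (f k)) = 0 := by
  rw [map_sub, gDer_X_inr, sub_eq_zero]
  simp [gDer, pderiv_inr_liftX, pderiv_inl_liftX, Derivation.finset_sum_apply]

theorem eulerDer_liftX (f : Fin p → MvPolynomial (Fin n) K) (j : Fin p)
    (g : MvPolynomial (Fin n) K) : eulerDer K n p f j (liftX K n p g) = 0 := by
  simp [eulerDer, pderiv_inr_liftX]

theorem eulerDer_X_inl (f : Fin p → MvPolynomial (Fin n) K) (j : Fin p) (l : Fin n) :
    eulerDer K n p f j (X (Sum.inl l)) = 0 := by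
  simp [eulerDer]

theorem eulerDer_X_inr (f : Fin p → MvPolynomial (Fin n) K) (j k : Fin p) :
    eulerDer K n p f j (X (Sum.inr k)) =
      if k = j then X (Sum.inr j) - liftX K n p (f j) else 0 := by
  split_ifs with hk <;> simp [eulerDer, hk]

theorem commute_eulerDer_gDer (f : Fin p → MvPolynomial (Fin n) K) (j : Fin p) (i : Fin n) :
    Commute (eulerDer K n p f j).toLinearMap (gDer K n p f i).toLinearMap := by
  refine derivation_commute_of_forall_X _ _ fun
    | .inl l => ?_
    | .inr k => ?_
  · rw [gDer_X_inl, eulerDer_X_inl, map_zero]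
    split_ifs <;> simp
  · rw [gDer_X_inr, eulerDer_liftX, eulerDer_X_inr]
    split_ifs with hk
    · rw [gDer_X_inr_sub_liftX]
    · rw [map_zero]

end Operators

theorem stmt13_general (K : Type*) [Field K] (n p : ℕ)
    (f : Fin p → MvPolynomial (Fin n) K) (j : Fin p) (i : Fin n) :
    (sOp K n p j + LinearMap.mulLeft K (liftX K n p (f j)) *
        (pderiv (Sum.inr j)).toLinearMap) * gOp K n p f i =
      gOp K n p f i *
        (sOp K n p j + LinearMap.mulLeft K (liftX K n p (f j)) *
          (pderiv (Sum.inr j)).toLinearMap) := by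
  rw [sOp_add_mulLeft_liftX, ← gDer_toLinearMap]
  exact ((commute_eulerDer_gDer f j i).neg_left.sub_left (Commute.one_left _)).eq

/-- `[sⱼ + M_{fⱼ}∘∂_{tⱼ}, gᵢ] = 0`. -/
theorem stmt13 (K : Type*) [Field K] [CharZero K] (n p : ℕ)
    (f : Fin p → MvPolynomial (Fin n) K) (j : Fin p) (i : Fin n) :
    (sOp K n p j + LinearMap.mulLeft K (liftX K n p (f j)) *
        (pderiv (Sum.inr j)).toLinearMap) * gOp K n p f i =
      gOp K n p f i *
        (sOp K n p j + LinearMap.mulLeft K (liftX K n p (f j)) *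
          (pderiv (Sum.inr j)).toLinearMap) :=
  stmt13_general K n p f j i
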